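/- arXiv:1401.2680 — 12 statements merged into one kernel-verified Lean document; each statement's English description precedes it below -/
import Mathlib

section
/- Let A be a unital algebra over a field and let a₁, a₂ ∈ A satisfy a₁a₂ = 0. Then the spectrum of a₁ + a₂ is contained in the union of the spectra of a₁ and a₂. -/
theorem spectrum_add_subset_of_mul_eq_zero
    {𝕜 A : Type*} [Field 𝕜] [Ring A] [Algebra 𝕜 A]
    (a₁ a₂ : A) (h : a₁ * a₂ = 0) :
    spectrum 𝕜 (a₁ + a₂) ⊆ spectrum 𝕜 a₁ ∪ spectrum 𝕜 a₂ := by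
  intro k hk
  by_contra hmem
  rw [Set.mem_union, not_or] at hmem
  obtain ⟨h1, h2⟩ := hmem
  rw [spectrum.notMem_iff] at h1 h2
  apply (spectrum.notMem_iff.mpr _) hk
  rcases eq_or_ne k 0 with rfl | hk0
  · -- a₁ and a₂ are units with product 0, so the ring is trivial
    simp only [map_zero, zero_sub] at h1 h2 ⊢
    have hu0 : IsUnit ((-a₁) * (-a₂)) := h1.mul h2
    rw [neg_mul_neg, h] at hu0
    have h01 : (0 : A) = 1 := isUnit_zero_iff.mp hu0
    have : Subsingleton A := subsingleton_of_zero_eq_one h01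
    exact isUnit_of_subsingleton _
  · have hu : IsUnit (algebraMap 𝕜 A k) := hk0.isUnit.map (algebraMap 𝕜 A)
    have key : (algebraMap 𝕜 A k - a₁) * (algebraMap 𝕜 A k - a₂)
        = algebraMap 𝕜 A k * (algebraMap 𝕜 A k - (a₁ + a₂)) := by
      rw [sub_mul, mul_sub, mul_sub, h, sub_zero, ← Algebra.commutes k a₁,
        mul_sub, mul_add]
      abel
    have heq : algebraMap 𝕜 A k - (a₁ + a₂)
        = (hu.unit⁻¹ : Aˣ) * ((algebraMap 𝕜 A k - a₁) * (algebraMap 𝕜 A k - a₂)) := by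
      have hinv : (hu.unit⁻¹ : Aˣ) * algebraMap 𝕜 A k = 1 := by
        exact hu.val_inv_mul
      rw [key, ← mul_assoc, hinv, one_mul]
    rw [heq]
    exact (hu.unit⁻¹).isUnit.mul (h1.mul h2)
end

section
/- Let A be a unital algebra over a field, n ≥ 2 an integer, and a₁, …, aₙ ∈ A such that aᵢaⱼ = 0 whenever 1 ≤ i < j ≤ n. Then σ(a₁ + ⋯ + aₙ) ⊆ σ(a₁) ∪ ⋯ ∪ σ(aₙ). -/
lemma aux_spectrum_sum_unit {𝕜 A : Type*} [Field 𝕜] [Ring A] [Algebra 𝕜 A]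
    (lam : 𝕜) (hlam : lam ≠ 0) :
    ∀ n (a : Fin n → A), (∀ i j : Fin n, i < j → a i * a j = 0) →
      (∀ k, IsUnit (algebraMap 𝕜 A lam - a k)) →
      IsUnit (algebraMap 𝕜 A lam - ∑ k, a k) := by
  intro n
  induction n with
  | zero =>
      intro a _ _
      simpa using (hlam.isUnit.map (algebraMap 𝕜 A))
  | succ n ih =>
      intro a hmul hk
      set u : A := algebraMap 𝕜 A lam with hu_def
      set s : A := ∑ k : Fin n, a k.castSucc with hs_def
      have hs : IsUnit (u - s) := by
        refine ih (fun k => a k.castSucc) ?_ (fun k => hk _)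
        intro i j hij
        exact hmul _ _ (by simpa using hij)
      have hlast : IsUnit (u - a (Fin.last n)) := hk _
      have hsa : s * a (Fin.last n) = 0 := by
        rw [hs_def, Finset.sum_mul]
        refine Finset.sum_eq_zero fun i _ => hmul _ _ (Fin.castSucc_lt_last i)
      have key : (u - s) * (u - a (Fin.last n)) = u * (u - (s + a (Fin.last n))) := by
        have e1 : (u - s) * (u - a (Fin.last n))
            = u * u - s * u - u * a (Fin.last n) + s * a (Fin.last n) := by
          noncomm_ring
        have e2 : u * (u - (s + a (Fin.last n)))
            = u * u - u * s - u * a (Fin.last n) := by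
          noncomm_ring
        rw [e1, e2, hsa, add_zero, hu_def,
          show s * algebraMap 𝕜 A lam = algebraMap 𝕜 A lam * s from (Algebra.commutes lam s).symm]
      have hu : IsUnit u := hlam.isUnit.map (algebraMap 𝕜 A)
      have hprod : IsUnit (u * (u - (s + a (Fin.last n)))) := key ▸ hs.mul hlast
      rcases hu with ⟨v, hv⟩
      have hres : IsUnit (u - (s + a (Fin.last n))) := by
        have hcalc : (↑v⁻¹ : A) * (u * (u - (s + a (Fin.last n))))
            = u - (s + a (Fin.last n)) := by
          rw [← hv, ← mul_assoc, Units.inv_mul, one_mul]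
        exact hcalc ▸ ((v⁻¹).isUnit.mul hprod)
      rw [Fin.sum_univ_castSucc]
      exact hres

theorem spectrum_sum_subset_of_pairwise_mul_eq_zero
    {𝕜 A : Type*} [Field 𝕜] [Ring A] [Algebra 𝕜 A]
    (n : ℕ) (hn : 2 ≤ n) (a : Fin n → A)
    (h : ∀ i j : Fin n, i < j → a i * a j = 0) :
    spectrum 𝕜 (∑ k, a k) ⊆ ⋃ k, spectrum 𝕜 (a k) := by
  intro lam hmem
  by_contra hcon
  simp only [Set.mem_iUnion, not_exists] at hcon
  have hk : ∀ k, IsUnit (algebraMap 𝕜 A lam - a k) :=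
    fun k => spectrum.notMem_iff.mp (hcon k)
  rcases eq_or_ne lam 0 with rfl | hlam0
  · have i0 : Fin n := ⟨0, by omega⟩
    have i1 : Fin n := ⟨1, by omega⟩
    have h0 : IsUnit (a (⟨0, by omega⟩ : Fin n)) := by
      have := hk ⟨0, by omega⟩
      rw [map_zero, zero_sub] at this
      simpa using this.neg
    have h01 : a (⟨0, by omega⟩ : Fin n) * a (⟨1, by omega⟩ : Fin n) = 0 :=
      h _ _ (by simp [Fin.lt_def])
    have ha1 : a (⟨1, by omega⟩ : Fin n) = 0 :=
      h0.mul_left_cancel (by rw [h01, mul_zero])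
    have hz : IsUnit (0 : A) := by
      have := hk ⟨1, by omega⟩
      rw [map_zero, zero_sub, ha1, neg_zero] at this
      exact this
    haveI : Subsingleton A := subsingleton_of_zero_eq_one (isUnit_zero_iff.mp hz)
    exact (spectrum.notMem_iff.mpr (isUnit_of_subsingleton _)) hmem
  · exact (spectrum.notMem_iff.mpr (aux_spectrum_sum_unit lam hlam0 n a h hk)) hmem
end

section
/- Let A be a unital algebra over a field and let a₁, a₂ ∈ A satisfy a₁a₂ = 0 and a₂a₁ = 0. Then σ(a₁ + a₂) \ {0} = (σ(a₁) ∪ σ(a₂)) \ {0}. -/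
private lemma isUnit_of_isUnit_mul_isUnit_mul {A : Type*} [Monoid A] {a b : A}
    (h₁ : IsUnit (a * b)) (h₂ : IsUnit (b * a)) : IsUnit a := by
  obtain ⟨u, hu⟩ := h₁
  obtain ⟨v, hv⟩ := h₂
  have hr : a * (b * ↑u⁻¹) = 1 := by rw [← mul_assoc, ← hu, Units.mul_inv]
  have hl : (↑v⁻¹ * b) * a = 1 := by rw [mul_assoc, ← hv, Units.inv_mul]
  have heq : ↑v⁻¹ * b = b * ↑u⁻¹ := by
    calc ↑v⁻¹ * b = ↑v⁻¹ * b * (a * (b * ↑u⁻¹)) := by rw [hr, mul_one]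
    _ = (↑v⁻¹ * b * a) * (b * ↑u⁻¹) := by simp only [mul_assoc]
    _ = b * ↑u⁻¹ := by rw [hl, one_mul]
  exact ⟨⟨a, b * ↑u⁻¹, hr, heq ▸ hl⟩, rfl⟩

theorem spectrum_add_of_mul_eq_zero_mul_eq_zero
    {𝕜 A : Type*} [Field 𝕜] [Ring A] [Algebra 𝕜 A]
    (a₁ a₂ : A) (h₁ : a₁ * a₂ = 0) (h₂ : a₂ * a₁ = 0) :
    spectrum 𝕜 (a₁ + a₂) \ {0} = (spectrum 𝕜 a₁ ∪ spectrum 𝕜 a₂) \ {0} := by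
  ext z
  simp only [Set.mem_diff, Set.mem_union, Set.mem_singleton_iff, spectrum.mem_iff]
  refine and_congr_left fun hz => ?_
  set e := algebraMap 𝕜 A z with he
  have hcomm : ∀ x : A, e * x = x * e := fun x => Algebra.commutes z x
  have key : ∀ b c : A, b * c = 0 → (e - b) * (e - c) = e * (e - (b + c)) := by
    intro b c h
    have hb := hcomm b
    rw [mul_sub, sub_mul, sub_mul, h, ← hb]
    noncomm_ring
  have key₁ : (e - a₁) * (e - a₂) = e * (e - (a₁ + a₂)) := key a₁ a₂ h₁
  have key₂ : (e - a₂) * (e - a₁) = e * (e - (a₂ + a₁)) := key a₂ a₁ h₂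
  rw [add_comm a₂ a₁] at key₂
  have hε : IsUnit e := by
    rw [he]; exact (isUnit_iff_ne_zero.mpr hz).map (algebraMap 𝕜 A)
  have hmul : ∀ x : A, IsUnit (e * x) ↔ IsUnit x := fun x => by
    conv_lhs => rw [← hε.unit_spec]
    exact hε.unit.isUnit_units_mul x
  have hunit : IsUnit (e - (a₁ + a₂)) ↔ IsUnit (e - a₁) ∧ IsUnit (e - a₂) := by
    constructor
    · intro h
      have hu₁ : IsUnit ((e - a₁) * (e - a₂)) := by rw [key₁, hmul]; exact h
      have hu₂ : IsUnit ((e - a₂) * (e - a₁)) := by rw [key₂, hmul]; exact h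
      exact ⟨isUnit_of_isUnit_mul_isUnit_mul hu₁ hu₂,
        isUnit_of_isUnit_mul_isUnit_mul hu₂ hu₁⟩
    · rintro ⟨hA, hB⟩
      have := hA.mul hB
      rw [key₁, hmul] at this
      exact this
  rw [not_iff_not.mpr hunit]
  tauto
end

section
/- Let A be a unital algebra over a field, n ≥ 2, and a₁, …, aₙ ∈ A such that aᵢaⱼ = 0 = aⱼaᵢ for all distinct i, j ∈ {1, …, n}. Then σ(∑ₖ aₖ) \ {0} = (⋃ₖ σ(aₖ)) \ {0}. -/
lemma key_unit {𝕜 A : Type*} [Field 𝕜] [Ring A] [Algebra 𝕜 A]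
    (a b : A) (hab : a * b = 0) (hba : b * a = 0) {l : 𝕜} (hl : l ≠ 0) :
    IsUnit (algebraMap 𝕜 A l - (a + b)) ↔
      IsUnit (algebraMap 𝕜 A l - a) ∧ IsUnit (algebraMap 𝕜 A l - b) := by
  set μ := algebraMap 𝕜 A l with hμdef
  have hμ : IsUnit μ := (isUnit_iff_ne_zero.mpr hl).map (algebraMap 𝕜 A)
  have hcomm : ∀ x : A, μ * x = x * μ := fun x => Algebra.commutes l x
  have hxy : (μ - a) * (μ - b) = μ * (μ - (a + b)) := by
    rw [mul_sub, sub_mul, sub_mul, hab, mul_sub, mul_add, hcomm a, sub_zero]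
    abel
  have hyx : (μ - b) * (μ - a) = μ * (μ - (a + b)) := by
    rw [mul_sub, sub_mul, sub_mul, hba, mul_sub, mul_add, hcomm b, sub_zero]
    abel
  constructor
  · rintro hu
    obtain ⟨v, hv⟩ := (hμ.mul hu)
    have h1 : (μ - a) * ((μ - b) * ↑v⁻¹) = 1 := by
      rw [← mul_assoc, hxy, ← hv, Units.mul_inv]
    have h2 : (↑v⁻¹ * (μ - b)) * (μ - a) = 1 := by
      rw [mul_assoc, hyx, ← hv, Units.inv_mul]
    have he : (↑v⁻¹ * (μ - b) : A) = (μ - b) * ↑v⁻¹ := left_inv_eq_right_inv h2 h1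
    have h1' : ((μ - b) * ↑v⁻¹) * (μ - a) = 1 := by rw [← he]; exact h2
    -- similarly for (μ - b)
    have g1 : (μ - b) * ((μ - a) * ↑v⁻¹) = 1 := by
      rw [← mul_assoc, hyx, ← hv, Units.mul_inv]
    have g2 : (↑v⁻¹ * (μ - a)) * (μ - b) = 1 := by
      rw [mul_assoc, hxy, ← hv, Units.inv_mul]
    have ge : (↑v⁻¹ * (μ - a) : A) = (μ - a) * ↑v⁻¹ := left_inv_eq_right_inv g2 g1
    have g1' : ((μ - a) * ↑v⁻¹) * (μ - b) = 1 := by rw [← ge]; exact g2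
    exact ⟨⟨⟨μ - a, (μ - b) * ↑v⁻¹, h1, h1'⟩, rfl⟩, ⟨⟨μ - b, (μ - a) * ↑v⁻¹, g1, g1'⟩, rfl⟩⟩
  · rintro ⟨hx, hy⟩
    have h3 := hx.mul hy
    rw [hxy] at h3
    obtain ⟨m, hm⟩ := hμ
    exact (Units.isUnit_units_mul m _).mp (by rwa [hm])

lemma key_spec {𝕜 A : Type*} [Field 𝕜] [Ring A] [Algebra 𝕜 A]
    (a b : A) (hab : a * b = 0) (hba : b * a = 0) :
    spectrum 𝕜 (a + b) \ {0} = (spectrum 𝕜 a ∪ spectrum 𝕜 b) \ {0} := by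
  ext l
  simp only [Set.mem_diff, Set.mem_singleton_iff, Set.mem_union, spectrum.mem_iff]
  constructor
  · rintro ⟨hmem, hl⟩
    refine ⟨?_, hl⟩
    by_contra hc
    push_neg at hc
    exact hmem ((key_unit a b hab hba hl).mpr hc)
  · rintro ⟨hmem, hl⟩
    refine ⟨fun hu => ?_, hl⟩
    rcases hmem with hx | hy
    · exact hx ((key_unit a b hab hba hl).mp hu).1
    · exact hy ((key_unit a b hab hba hl).mp hu).2

lemma spec_sum_aux {𝕜 A : Type*} [Field 𝕜] [Ring A] [Algebra 𝕜 A]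
    (n : ℕ) (a : Fin n → A)
    (h : ∀ i j : Fin n, i ≠ j → a i * a j = 0) :
    spectrum 𝕜 (∑ k, a k) \ {0} = (⋃ k, spectrum 𝕜 (a k)) \ {0} := by
  induction n with
  | zero =>
      simp only [Finset.univ_eq_empty, Finset.sum_empty, Set.iUnion_of_empty]
      ext l
      simp only [Set.mem_diff, Set.mem_singleton_iff, Set.mem_empty_iff_false,
        false_and, iff_false, not_and, not_not, spectrum.mem_iff]
      intro hmem
      by_contra hl
      exact hmem (by simpa using (isUnit_iff_ne_zero.mpr hl).map (algebraMap 𝕜 A))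
  | succ n ih =>
      have hsum : ∑ k, a k = a 0 + ∑ k : Fin n, a k.succ := Fin.sum_univ_succ a
      have hab : a 0 * ∑ k : Fin n, a k.succ = 0 := by
        rw [Finset.mul_sum]
        exact Finset.sum_eq_zero fun k _ => h 0 k.succ (Fin.succ_ne_zero k).symm
      have hba : (∑ k : Fin n, a k.succ) * a 0 = 0 := by
        rw [Finset.sum_mul]
        exact Finset.sum_eq_zero fun k _ => h k.succ 0 (Fin.succ_ne_zero k)
      rw [hsum, key_spec _ _ hab hba, Set.union_diff_distrib,
        ih (fun k => a k.succ) (fun i j hij => h i.succ j.succ (by simpa using hij)),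
        ← Set.union_diff_distrib]
      congr 1
      ext l
      simp only [Set.mem_union, Set.mem_iUnion, Fin.exists_fin_succ]

theorem spectrum_sum_of_pairwise_mul_eq_zero
    {𝕜 A : Type*} [Field 𝕜] [Ring A] [Algebra 𝕜 A]
    (n : ℕ) (hn : 2 ≤ n) (a : Fin n → A)
    (h : ∀ i j : Fin n, i ≠ j → a i * a j = 0) :
    spectrum 𝕜 (∑ k, a k) \ {0} = (⋃ k, spectrum 𝕜 (a k)) \ {0} :=
  spec_sum_aux n a h
end

section
/- Let A be a unital algebra over a field and let a₁, a₂ ∈ A satisfy a₁a₂ = 0 and a₂² = 0. Then σ(a₁ + a₂) \ {0} = σ(a₁) \ {0}. -/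
theorem spectrum_add_of_mul_eq_zero_sq_eq_zero
    {𝕜 A : Type*} [Field 𝕜] [Ring A] [Algebra 𝕜 A]
    (a₁ a₂ : A) (h₁ : a₁ * a₂ = 0) (h₂ : a₂ * a₂ = 0) :
    spectrum 𝕜 (a₁ + a₂) \ {0} = spectrum 𝕜 a₁ \ {0} := by
  ext μ
  simp only [Set.mem_diff, Set.mem_singleton_iff, spectrum.mem_iff]
  refine and_congr_left fun hμ => not_congr ?_
  set c : A := μ⁻¹ • a₂ with hc
  have hcc : c * c = 0 := by
    simp [hc, smul_mul_assoc, mul_smul_comm, h₂]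
  have hu1 : (1 - c) * (1 + c) = 1 := by
    have : (1 - c) * (1 + c) = 1 - c * c := by noncomm_ring
    rw [this, hcc, sub_zero]
  have hu2 : (1 + c) * (1 - c) = 1 := by
    have : (1 + c) * (1 - c) = 1 - c * c := by noncomm_ring
    rw [this, hcc, sub_zero]
  let u : Aˣ := ⟨1 - c, 1 + c, hu1, hu2⟩
  have key : algebraMap 𝕜 A μ - (a₁ + a₂) = (algebraMap 𝕜 A μ - a₁) * u := by
    show algebraMap 𝕜 A μ - (a₁ + a₂) = (algebraMap 𝕜 A μ - a₁) * (1 - c)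
    have h3 : algebraMap 𝕜 A μ * c = a₂ := by
      rw [hc, Algebra.smul_def, ← mul_assoc, ← map_mul, mul_inv_cancel₀ hμ, map_one, one_mul]
    have h4 : a₁ * c = 0 := by
      rw [hc, mul_smul_comm, h₁, smul_zero]
    rw [mul_sub, sub_mul, sub_mul, h3, h4, mul_one, mul_one, sub_zero]
    abel
  rw [key, Units.isUnit_mul_units]
end

section
/- Let A be a unital algebra over a field and let a₁, a₂ ∈ A satisfy a₁² = 0 and a₂² = 0. Then for every nonzero scalar λ: λ ∈ σ(a₁ + a₂) if and only if λ² ∈ σ(a₁a₂). -/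
theorem mem_spectrum_add_iff_sq_mem_spectrum_mul
    {𝕜 A : Type*} [Field 𝕜] [Ring A] [Algebra 𝕜 A]
    (a₁ a₂ : A) (h₁ : a₁ * a₁ = 0) (h₂ : a₂ * a₂ = 0)
    (μ : 𝕜) (hμ : μ ≠ 0) :
    μ ∈ spectrum 𝕜 (a₁ + a₂) ↔ μ ^ 2 ∈ spectrum 𝕜 (a₁ * a₂) := by
  set l : A := algebraMap 𝕜 A μ with hl
  have hμ2 : (μ ^ 2) ≠ 0 := pow_ne_zero _ hμ
  have hm : ∀ x : A, l * x = μ • x := fun x => (Algebra.smul_def μ x).symm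
  have hm' : ∀ x : A, x * l = μ • x := fun x => by
    rw [hl, ← Algebra.commutes]; exact (Algebra.smul_def μ x).symm
  have hone : l = μ • 1 := by rw [hl, Algebra.algebraMap_eq_smul_one]
  -- b + l is a unit whenever b * b = 0
  have key : ∀ b : A, b * b = 0 → IsUnit (b + l) := by
    intro b hb
    refine ⟨⟨b + l, (μ ^ 2)⁻¹ • (l - b), ?_, ?_⟩, rfl⟩
    · have h : (b + l) * (l - b) = (μ ^ 2) • (1 : A) := by
        simp only [mul_sub, add_mul, hm, hm', hb, smul_smul, smul_sub, smul_add]; rw [hone]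
        module
      rw [mul_smul_comm, h, smul_smul, inv_mul_cancel₀ hμ2, one_smul]
    · have h : (l - b) * (b + l) = (μ ^ 2) • (1 : A) := by
        simp only [sub_mul, mul_add, hm, hm', hb, smul_smul, smul_sub, smul_add]; rw [hone]
        module
      rw [smul_mul_assoc, h, smul_smul, inv_mul_cancel₀ hμ2, one_smul]
  obtain ⟨u, hu⟩ := key a₁ h₁
  obtain ⟨v, hv⟩ := key a₂ h₂
  have hlu : IsUnit l := (algebraMap 𝕜 A).isUnit_map (IsUnit.mk0 μ hμ)
  obtain ⟨w, hw⟩ := hlu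
  have ident : (u : A) * ((a₁ + a₂) - l) * (v : A) = (w : A) * (a₁ * a₂ - l * l) := by
    rw [hu, hv, hw]
    simp only [mul_sub, sub_mul, mul_add, add_mul, hm, hm', h₁, h₂,
      smul_smul, smul_sub, smul_add, mul_smul_comm, smul_mul_assoc]
    simp only [mul_assoc, h₂, mul_zero, smul_zero]
    simp only [← mul_assoc, h₁, zero_mul]
    rw [hone]
    module
  rw [spectrum.mem_iff, spectrum.mem_iff, not_iff_not]
  have neg_iff : ∀ x y : A, x = -y → (IsUnit x ↔ IsUnit y) := by
    rintro x y rfl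
    exact ⟨fun h => by simpa using h.neg, fun h => h.neg⟩
  have lhs_iff : IsUnit (algebraMap 𝕜 A μ - (a₁ + a₂)) ↔
      IsUnit ((u : A) * ((a₁ + a₂) - l) * (v : A)) := by
    rw [mul_assoc, u.isUnit_units_mul, Units.isUnit_mul_units]
    exact neg_iff _ _ (by rw [hl]; abel)
  rw [lhs_iff, ident, w.isUnit_units_mul]
  have hsq : algebraMap 𝕜 A (μ ^ 2) = l * l := by rw [hl, ← map_mul, pow_two]
  rw [hsq]
  exact (neg_iff _ _ (by abel)).symm
end

section
/- Let A be a unital algebra over a field and let a₁, a₂ ∈ A satisfy a₁² = 0 and a₂² = 0. Then σ(a₁ + a₂) \ {0} = {λ : λ² ∈ σ(a₂a₁)} \ {0}. -/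
/-! For a unit `μ`, each `μ + aᵢ` is invertible because `aᵢ` is square-zero, and
`(μ + a₁) (μ - (a₁ + a₂)) (μ + a₂) = μ (μ² - a₁ a₂)`.
Hence `μ - (a₁ + a₂)` is invertible iff `μ² - a₁ a₂` is, and Jacobson's lemma trades `a₁ a₂`
for `a₂ a₁` away from `0`. -/

section SquareZero

variable {R A : Type*} [CommRing R] [Ring A] [Algebra R A]

theorem isUnit_algebraMap_add_of_mul_self_eq_zero {μ : R} (hμ : IsUnit μ) {c : A}
    (hc : c * c = 0) : IsUnit (algebraMap R A μ + c) :=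
  IsNilpotent.isUnit_add_left_of_commute ⟨2, by rw [sq, hc]⟩ (hμ.map _)
    (Algebra.commutes μ c).symm

theorem algebraMap_add_mul_sub_add_mul_algebraMap_add (μ : R) {a₁ a₂ : A}
    (h₁ : a₁ * a₁ = 0) (h₂ : a₂ * a₂ = 0) :
    (algebraMap R A μ + a₁) * (algebraMap R A μ - (a₁ + a₂)) * (algebraMap R A μ + a₂) =
      algebraMap R A μ * (algebraMap R A (μ ^ 2) - a₁ * a₂) := by
  have hc (x : A) : x * algebraMap R A μ = algebraMap R A μ * x := (Algebra.commutes μ x).symm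
  rw [map_pow, sq]
  simp only [mul_add, add_mul, mul_sub, sub_mul, mul_assoc, hc, h₁, h₂]
  noncomm_ring

theorem spectrum.mem_add_iff_sq_mem_mul_of_mul_self_eq_zero {μ : R} (hμ : IsUnit μ)
    {a₁ a₂ : A} (h₁ : a₁ * a₁ = 0) (h₂ : a₂ * a₂ = 0) :
    μ ∈ spectrum R (a₁ + a₂) ↔ μ ^ 2 ∈ spectrum R (a₁ * a₂) := by
  obtain ⟨u₁, hu₁⟩ := isUnit_algebraMap_add_of_mul_self_eq_zero hμ h₁
  obtain ⟨u₂, hu₂⟩ := isUnit_algebraMap_add_of_mul_self_eq_zero hμ h₂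
  obtain ⟨m, hm⟩ := hμ.map (algebraMap R A)
  rw [spectrum.mem_iff, spectrum.mem_iff, not_iff_not, ← Units.isUnit_units_mul u₁,
    ← Units.isUnit_mul_units _ u₂, ← Units.isUnit_units_mul m (_ - a₁ * a₂), hu₁, hu₂, hm,
    algebraMap_add_mul_sub_add_mul_algebraMap_add μ h₁ h₂]

end SquareZero

theorem spectrum_add_eq_sq_mem_spectrum_mul_swap
    {𝕜 A : Type*} [Field 𝕜] [Ring A] [Algebra 𝕜 A]
    (a₁ a₂ : A) (h₁ : a₁ * a₁ = 0) (h₂ : a₂ * a₂ = 0) :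
    spectrum 𝕜 (a₁ + a₂) \ {0} = {μ : 𝕜 | μ ^ 2 ∈ spectrum 𝕜 (a₂ * a₁)} \ {0} := by
  ext μ
  refine and_congr_left fun hμ => ?_
  obtain ⟨u, rfl⟩ : IsUnit μ := isUnit_iff_ne_zero.mpr hμ
  rw [Set.mem_ofPred_eq, spectrum.mem_add_iff_sq_mem_mul_of_mul_self_eq_zero u.isUnit h₁ h₂,
    ← Units.val_pow_eq_pow_val, spectrum.unit_mem_mul_comm]
end

section
/- Let A be a unital algebra over a field, n ≥ 2, and a₀, a₁, …, a_{n−1} ∈ A such that aⱼaₖ = 0 for all j, k ∈ {0, …, n−1} except possibly when k = (j+1) mod n. Then σ(a₀ + a₁ + ⋯ + a_{n−1}) \ {0} = {λ : λⁿ ∈ σ(a₀a₁⋯a_{n−1})} \ {0}. -/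
/-!
Put `s = ∑ aⱼ` and `cⱼ = aⱼ aⱼ₊₁ ⋯ aⱼ₊ₙ₋₁` (indices mod `n`). The vanishing hypothesis gives
`s ^ n = ∑ cⱼ` with `cⱼ cₖ = 0` for `j ≠ k`, so for `λ ≠ 0` the element `λ - s ^ n` is
invertible iff every `λ - cⱼ` is; and each `cⱼ` is a rotation `y x` of `c₀ = x y`, so
`σ(cⱼ) \ {0} = σ(c₀) \ {0}`. It remains to see that `μ ∈ σ(s) ↔ μ ^ n ∈ σ(s ^ n)` for `μ ≠ 0`.
One direction is the spectral mapping inclusion. The other fails for general `s` over a field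
without `n`-th roots of unity; here the linear map `Φ x = ∑ⱼ aⱼ x aⱼ₊₁ ⋯ aⱼ₊ₙ₋₁`, which sees only
the part of `x` of degree `0 mod n` in the grading where each `aⱼ` has degree one, turns an
inverse of `μ - s` into an inverse of `μ ^ n - s ^ n`.
-/

open Finset Fin.NatCast

section CyclicProd

variable {M : Type*} [Monoid M] {n : ℕ} [NeZero n]

def cyclicProd (a : Fin n → M) (j : Fin n) (m : ℕ) : M :=
  (List.ofFn fun i : Fin m => a (j + (i : ℕ))).prod

variable (a : Fin n → M)

theorem cyclicProd_add (j : Fin n) (m l : ℕ) :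
    cyclicProd a j (m + l) = cyclicProd a j m * cyclicProd a (j + m) l := by
  simp [cyclicProd, List.ofFn_add, add_assoc]

@[simp]
theorem cyclicProd_one (j : Fin n) : cyclicProd a j 1 = a j := by
  simp [cyclicProd]

theorem cyclicProd_one_add (j : Fin n) (m : ℕ) :
    cyclicProd a j (1 + m) = a j * cyclicProd a (j + 1) m := by
  rw [cyclicProd_add, cyclicProd_one, Nat.cast_one]

theorem list_prod_ofFn_eq_cyclicProd : (List.ofFn a).prod = cyclicProd a 0 n := by
  simp [cyclicProd]

theorem Commute.cyclicProd_right {x : M} (h : ∀ j, Commute x (a j)) (j : Fin n) (m : ℕ) :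
    Commute x (cyclicProd a j m) :=
  Commute.list_prod_right _ _ fun _ hy => by
    obtain ⟨i, rfl⟩ := List.mem_ofFn.mp hy
    exact h _

end CyclicProd

section CyclicShift

variable {n : ℕ} [NeZero n]

def IsCyclicShift {M : Type*} [MonoidWithZero M] (a : Fin n → M) : Prop :=
  ∀ j k, k ≠ j + 1 → a j * a k = 0

namespace IsCyclicShift

section MonoidWithZero

variable {M : Type*} [MonoidWithZero M] {a : Fin n → M}

theorem cyclicProd_mul_cyclicProd (ha : IsCyclicShift a) {j k : Fin n} {m l : ℕ}
    (hm : m ≠ 0) (hl : l ≠ 0) (hk : k ≠ j + m) : cyclicProd a j m * cyclicProd a k l = 0 := by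
  obtain ⟨m, rfl⟩ : ∃ m', m = m' + 1 := ⟨m - 1, by omega⟩
  obtain ⟨l, rfl⟩ : ∃ l', l = 1 + l' := ⟨l - 1, by omega⟩
  rw [cyclicProd_add, cyclicProd_one, cyclicProd_one_add, mul_assoc, ← mul_assoc (a _),
    ha _ _ (by rwa [add_assoc, ← Nat.cast_succ]), zero_mul, mul_zero]

theorem cyclicProd_mul_cyclicProd_self (ha : IsCyclicShift a) {j k : Fin n} (hjk : j ≠ k) :
    cyclicProd a j n * cyclicProd a k n = 0 :=
  ha.cyclicProd_mul_cyclicProd (NeZero.ne n) (NeZero.ne n) (by simpa using hjk.symm)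

end MonoidWithZero

variable {R : Type*} [Semiring R] {a : Fin n → R}

theorem cyclicProd_mul_sum (ha : IsCyclicShift a) (j : Fin n) {m l : ℕ} (hm : m ≠ 0)
    (hl : l ≠ 0) : cyclicProd a j m * ∑ i, cyclicProd a i l = cyclicProd a j (m + l) := by
  rw [mul_sum, sum_eq_single (j + m) (fun k _ hk => ha.cyclicProd_mul_cyclicProd hm hl hk)
    (by simp), cyclicProd_add]

theorem sum_mul_cyclicProd (ha : IsCyclicShift a) (j : Fin n) {m l : ℕ} (hm : m ≠ 0)
    (hl : l ≠ 0) :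
    (∑ i, cyclicProd a i m) * cyclicProd a j l = cyclicProd a (j - m) (m + l) := by
  rw [sum_mul, sum_eq_single (j - m) (fun i _ hi => ha.cyclicProd_mul_cyclicProd hm hl
    (by rwa [ne_eq, ← sub_eq_iff_eq_add, eq_comm])) (by simp), cyclicProd_add, sub_add_cancel]

theorem sum_pow (ha : IsCyclicShift a) {m : ℕ} (hm : m ≠ 0) :
    (∑ j, a j) ^ m = ∑ j, cyclicProd a j m := by
  induction m with
  | zero => exact absurd rfl hm
  | succ m ih =>
    rcases eq_or_ne m 0 with rfl | hm
    · simp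
    have hsum : ∑ j, a j = ∑ j, cyclicProd a j 1 := by simp
    rw [pow_succ, ih hm, sum_mul, hsum]
    exact sum_congr rfl fun j _ => ha.cyclicProd_mul_sum j hm one_ne_zero

theorem commute_sum_pow (ha : IsCyclicShift a) (j : Fin n) :
    Commute ((∑ i, a i) ^ n) (a j) := by
  have hn := NeZero.ne n
  calc (∑ i, a i) ^ n * a j = cyclicProd a (j - n) (n + 1) := by
        rw [ha.sum_pow hn, ← cyclicProd_one a j, ha.sum_mul_cyclicProd j hn one_ne_zero]
    _ = cyclicProd a j (1 + n) := by simp [add_comm]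
    _ = a j * (∑ i, a i) ^ n := by
        rw [ha.sum_pow hn, ← ha.cyclicProd_mul_sum j one_ne_zero hn, cyclicProd_one]

end IsCyclicShift

end CyclicShift

section Compression

variable {R A : Type*} [CommSemiring R] [Semiring A] [Algebra R A] {n : ℕ} [NeZero n]

variable (R) in
def cyclicCompression (a : Fin n → A) : A →ₗ[R] A :=
  ∑ j, LinearMap.mulLeftRight R (a j, cyclicProd a (j + 1) (n - 1))

namespace IsCyclicShift

variable {a : Fin n → A} (ha : IsCyclicShift a)
include ha

theorem cyclicCompression_one : cyclicCompression R a 1 = (∑ j, a j) ^ n := by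
  simp only [cyclicCompression, LinearMap.coe_sum, Finset.sum_apply,
    LinearMap.mulLeftRight_apply, mul_one, ← cyclicProd_one_add,
    Nat.add_sub_cancel' (NeZero.one_le : 1 ≤ n), ha.sum_pow (NeZero.ne n)]

theorem cyclicCompression_sum_pow {k : ℕ} (hk : 0 < k) (hkn : k < n) :
    cyclicCompression R a ((∑ j, a j) ^ k) = 0 := by
  simp only [cyclicCompression, LinearMap.coe_sum, Finset.sum_apply,
    LinearMap.mulLeftRight_apply]
  refine sum_eq_zero fun j _ => ?_
  rw [ha.sum_pow hk.ne', ← cyclicProd_one a j, ha.cyclicProd_mul_sum j one_ne_zero hk.ne']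
  refine ha.cyclicProd_mul_cyclicProd (by omega) (by omega) ?_
  rw [Nat.cast_add, Nat.cast_one, ← add_assoc, ne_eq, left_eq_add, Fin.natCast_eq_zero]
  exact Nat.not_dvd_of_pos_of_lt hk hkn

theorem cyclicCompression_sum_pow_mul (x : A) :
    cyclicCompression R a ((∑ j, a j) ^ n * x) = (∑ j, a j) ^ n * cyclicCompression R a x := by
  simp only [cyclicCompression, LinearMap.coe_sum, Finset.sum_apply,
    LinearMap.mulLeftRight_apply, mul_sum, ← mul_assoc, (ha.commute_sum_pow _).eq]

theorem cyclicCompression_mul_sum_pow (x : A) :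
    cyclicCompression R a (x * (∑ j, a j) ^ n) = cyclicCompression R a x * (∑ j, a j) ^ n := by
  simp only [cyclicCompression, LinearMap.coe_sum, Finset.sum_apply,
    LinearMap.mulLeftRight_apply, sum_mul, mul_assoc,
    (Commute.cyclicProd_right a ha.commute_sum_pow _ _).eq]

end IsCyclicShift

end Compression

section Spectrum

variable {𝕜 A : Type*} [Field 𝕜] [Ring A] [Algebra 𝕜 A]

theorem mem_spectrum_add_iff_of_orthogonal {x y : A} (hxy : x * y = 0) (hyx : y * x = 0)
    {μ : 𝕜} (hμ : μ ≠ 0) :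
    μ ∈ spectrum 𝕜 (x + y) ↔ μ ∈ spectrum 𝕜 x ∨ μ ∈ spectrum 𝕜 y := by
  have key : ∀ {x y : A}, x * y = 0 → (algebraMap 𝕜 A μ - x) * (algebraMap 𝕜 A μ - y) =
      algebraMap 𝕜 A μ * (algebraMap 𝕜 A μ - (x + y)) := by
    intro x y h
    simp only [sub_mul, mul_sub, mul_add, h, ← Algebra.commutes μ x]
    abel
  have hc : Commute (algebraMap 𝕜 A μ - x) (algebraMap 𝕜 A μ - y) :=
    (key hxy).trans (add_comm x y ▸ key hyx).symm
  rw [spectrum.mem_iff, spectrum.mem_iff, spectrum.mem_iff, ← not_and_or, ← hc.isUnit_mul_iff,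
    key hxy, ((isUnit_iff_ne_zero.mpr hμ).map _).mul_left_iff]

theorem mem_spectrum_sum_iff_of_orthogonal {ι : Type*} {c : ι → A}
    (hc : Pairwise fun i j => c i * c j = 0) (s : Finset ι) {μ : 𝕜} (hμ : μ ≠ 0) :
    μ ∈ spectrum 𝕜 (∑ i ∈ s, c i) ↔ ∃ i ∈ s, μ ∈ spectrum 𝕜 (c i) := by
  classical
  induction s using Finset.induction_on with
  | empty => simp [spectrum.mem_iff, (isUnit_iff_ne_zero.mpr hμ).map]
  | insert i s hi ih =>
    have hne : ∀ j ∈ s, i ≠ j := fun j hj hij => hi (hij ▸ hj)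
    rw [sum_insert hi, mem_spectrum_add_iff_of_orthogonal
      (by rw [mul_sum]; exact sum_eq_zero fun j hj => hc (hne j hj))
      (by rw [sum_mul]; exact sum_eq_zero fun j hj => hc (hne j hj).symm) hμ, ih,
      exists_mem_insert]

/-- Formally `(μ - s)⁻¹ = ∑ₖ sᵏ / μᵏ⁺¹` and `Φ` keeps only the terms with `n ∣ k`, which sum to a
multiple of `(μ ^ n - s ^ n)⁻¹`; the proof checks that `μ ^ (n - 1) + Φ (μ - s)⁻¹` inverts
`μ ^ n - s ^ n` up to the scalar `μ ^ (2 * n - 1)`. -/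
theorem isUnit_algebraMap_pow_sub_pow {s : A} {n : ℕ} (hn : n ≠ 0) (Φ : A →ₗ[𝕜] A)
    (hΦ_one : Φ 1 = s ^ n) (hΦ_pow : ∀ k, 0 < k → k < n → Φ (s ^ k) = 0)
    (hΦ_mul_left : ∀ x, Φ (s ^ n * x) = s ^ n * Φ x)
    (hΦ_mul_right : ∀ x, Φ (x * s ^ n) = Φ x * s ^ n)
    {μ : 𝕜} (hμ : μ ≠ 0) (h : IsUnit (algebraMap 𝕜 A μ - s)) :
    IsUnit (algebraMap 𝕜 A (μ ^ n) - s ^ n) := by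
  set x := algebraMap 𝕜 A (μ ^ n) - s ^ n
  set G := ∑ i ∈ range n, algebraMap 𝕜 A μ ^ i * s ^ (n - 1 - i)
  have hcomm := Algebra.commute_algebraMap_left μ s
  have hxG : x = (algebraMap 𝕜 A μ - s) * G := by rw [hcomm.mul_geom_sum₂, ← map_pow]
  have hGx : x = G * (algebraMap 𝕜 A μ - s) := by rw [hcomm.geom_sum₂_mul, ← map_pow]
  have hΦG : Φ G = μ ^ (n - 1) • s ^ n := by
    simp only [G, map_sum, ← map_pow, ← Algebra.smul_def, map_smul]
    rw [sum_eq_single (n - 1) (fun i hi hin => ?_) (by simp [hn]), Nat.sub_self, pow_zero,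
      hΦ_one]
    rw [hΦ_pow _ (by grind) (by omega), smul_zero]
  have hΦ_x_left : ∀ y, Φ (x * y) = x * Φ y := fun y => by
    simp only [x, sub_mul, map_sub, ← Algebra.smul_def, map_smul, hΦ_mul_left]
  have hΦ_x_right : ∀ y, Φ (y * x) = Φ y * x := fun y => by
    simp only [x, mul_sub, map_sub, ← Algebra.commutes, ← Algebra.smul_def, map_smul,
      hΦ_mul_right]
  obtain ⟨u, hu⟩ := h
  have hxr : x * ↑u⁻¹ = G := by rw [hGx, mul_assoc, ← hu, u.mul_inv, mul_one]
  have hrx : ↑u⁻¹ * x = G := by rw [hxG, ← mul_assoc, ← hu, u.inv_mul, one_mul]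
  set w := algebraMap 𝕜 A (μ ^ (n - 1)) + Φ ↑u⁻¹
  have hxw : x * w = algebraMap 𝕜 A (μ ^ (n - 1) * μ ^ n) := by
    rw [mul_add, ← hΦ_x_left, hxr, hΦG, ← Algebra.commutes, Algebra.smul_def]
    simp only [x, mul_sub, map_mul, sub_add_cancel]
  have hwx : w * x = algebraMap 𝕜 A (μ ^ (n - 1) * μ ^ n) := by
    rw [add_mul, ← hΦ_x_right, hrx, hΦG, Algebra.smul_def]
    simp only [x, mul_sub, map_mul, sub_add_cancel]
  have hunit : IsUnit (x * w) := hxw ▸ (isUnit_iff_ne_zero.mpr (by simp [hμ])).map _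
  have hxw_comm : Commute x w := hxw.trans hwx.symm
  exact (hxw_comm.isUnit_mul_iff.mp hunit).1

variable {n : ℕ} [NeZero n] {a : Fin n → A}

theorem mem_spectrum_cyclicProd_iff (j : Fin n) {μ : 𝕜} (hμ : μ ≠ 0) :
    μ ∈ spectrum 𝕜 (cyclicProd a j n) ↔ μ ∈ spectrum 𝕜 (cyclicProd a 0 n) := by
  have h0 := cyclicProd_add a 0 j (n - j)
  rw [Nat.add_sub_cancel' j.is_lt.le, zero_add, Fin.cast_val_eq_self] at h0
  have hj := cyclicProd_add a j (n - j) j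
  have hrot : j + ((n - j : ℕ) : Fin n) = 0 := Fin.ext <| by
    simp [Fin.val_add, Fin.val_natCast, Nat.add_sub_cancel' j.is_lt.le]
  rw [Nat.sub_add_cancel j.is_lt.le, hrot] at hj
  have := congrArg (μ ∈ ·) (spectrum.nonzero_mul_comm (𝕜 := 𝕜) (cyclicProd a j (n - j))
    (cyclicProd a 0 j))
  simpa [h0, hj, hμ] using this

theorem IsCyclicShift.mem_spectrum_sum_iff (ha : IsCyclicShift a) {μ : 𝕜} (hμ : μ ≠ 0) :
    μ ∈ spectrum 𝕜 (∑ j, a j) ↔ μ ^ n ∈ spectrum 𝕜 ((∑ j, a j) ^ n) := by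
  refine ⟨spectrum.pow_mem_pow _ _, not_imp_not.mp fun h => ?_⟩
  rw [spectrum.mem_iff, not_not] at h ⊢
  exact isUnit_algebraMap_pow_sub_pow (NeZero.ne n) (cyclicCompression 𝕜 a)
    ha.cyclicCompression_one (fun _ => ha.cyclicCompression_sum_pow)
    ha.cyclicCompression_sum_pow_mul ha.cyclicCompression_mul_sum_pow hμ h

end Spectrum

theorem spectrum_cyclic_sum
    {𝕜 A : Type*} [Field 𝕜] [Ring A] [Algebra 𝕜 A]
    (n : ℕ) (hn : 2 ≤ n) (a : Fin n → A)
    (h : ∀ j k : Fin n, (k : ℕ) ≠ ((j : ℕ) + 1) % n → a j * a k = 0) :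
    spectrum 𝕜 (∑ j, a j) \ {0}
      = {μ : 𝕜 | μ ^ n ∈ spectrum 𝕜 (List.ofFn a).prod} \ {0} := by
  have : NeZero n := ⟨by omega⟩
  have ha : IsCyclicShift a := fun j k hk => h j k fun hjk => hk <| Fin.ext <| by
    rw [hjk, Fin.val_add, Fin.val_one', Nat.add_mod_mod]
  ext μ
  simp only [Set.mem_sdiff, Set.mem_singleton_iff, Set.mem_ofPred_eq]
  refine and_congr_left fun hμ => ?_
  rw [ha.mem_spectrum_sum_iff hμ, ha.sum_pow (NeZero.ne n),
    mem_spectrum_sum_iff_of_orthogonal (fun _ _ => ha.cyclicProd_mul_cyclicProd_self) _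
      (pow_ne_zero n hμ), list_prod_ofFn_eq_cyclicProd]
  simp [mem_spectrum_cyclicProd_iff _ (pow_ne_zero n hμ)]
end

section
/- Let H be a complex Hilbert space and S, T bounded operators on H such that ST and TS are compact. Then the essential spectrum satisfies σ_e(S + T) \ {0} = (σ_e(S) ∪ σ_e(T)) \ {0}. -/
/-- The essential spectrum of a bounded operator `T`, defined via Atkinson's
characterization: `μ ∉ σ_e(T)` iff `T - μ • 1` is invertible modulo compact
operators (equivalently, `[T] - μ[I]` is invertible in the Calkin algebra). -/
def essentialSpectrum {H : Type*} [NormedAddCommGroup H] [InnerProductSpace ℂ H]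
    [CompleteSpace H] (T : H →L[ℂ] H) : Set ℂ :=
  {μ : ℂ | ¬ ∃ S : H →L[ℂ] H,
      IsCompactOperator ⇑(S * (T - μ • 1) - 1) ∧
      IsCompactOperator ⇑((T - μ • 1) * S - 1)}

/-! For `μ ≠ 0`, write `a, b` for the images of `S, T` in the Calkin algebra, so that
`a * b = b * a = 0`. Then `(μ - a) * (μ - b) = (μ - b) * (μ - a) = μ * (μ - (a + b))`; a product
of two commuting elements is invertible iff both factors are, and `μ` is invertible. -/

theorem isUnit_sub_add_iff_of_mul_eq_zero {R : Type*} [Ring R] {a b m : R}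
    (hab : a * b = 0) (hba : b * a = 0) (hm : IsUnit m)
    (ha : Commute m a) (hb : Commute m b) :
    IsUnit (m - (a + b)) ↔ IsUnit (m - a) ∧ IsUnit (m - b) := by
  have hab' : (m - a) * (m - b) = m * (m - (a + b)) := by
    simp only [sub_mul, mul_sub, hab, ha.eq, mul_add]; abel
  have hba' : (m - b) * (m - a) = m * (m - (a + b)) := by
    simp only [sub_mul, mul_sub, hba, hb.eq, mul_add]; abel
  rw [← hm.mul_left_iff, ← hab', Commute.isUnit_mul_iff (hab'.trans hba'.symm)]

theorem spectrum_add_diff_zero_of_mul_eq_zero {𝕜 A : Type*} [Field 𝕜] [Ring A] [Algebra 𝕜 A]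
    {a b : A} (hab : a * b = 0) (hba : b * a = 0) :
    spectrum 𝕜 (a + b) \ {0} = (spectrum 𝕜 a ∪ spectrum 𝕜 b) \ {0} := by
  ext r
  simp only [Set.mem_sdiff, Set.mem_union, Set.mem_singleton_iff, spectrum.mem_iff]
  refine and_congr_left fun hr => ?_
  have hunit : IsUnit (algebraMap 𝕜 A r) := (isUnit_iff_ne_zero.mpr hr).map _
  rw [isUnit_sub_add_iff_of_mul_eq_zero hab hba hunit (Algebra.commutes r a)
    (Algebra.commutes r b), not_and_or]

section CalkinAlgebra

variable (R E : Type*) [CommRing R] [TopologicalSpace E] [AddCommGroup E] [Module R E]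
  [IsTopologicalAddGroup E] [ContinuousConstSMul R E]

def compactOperatorIdeal : TwoSidedIdeal (E →L[R] E) :=
  .mk' {T | IsCompactOperator T} isCompactOperator_zero .add .neg
    (fun hT => hT.clm_comp _) (fun hT => hT.comp_clm _)

abbrev CalkinAlgebra : Type _ := (compactOperatorIdeal R E).ringCon.Quotient

def CalkinAlgebra.mk : (E →L[R] E) →ₐ[R] CalkinAlgebra R E :=
  (compactOperatorIdeal R E).ringCon.mkₐ R

variable {R E}

theorem CalkinAlgebra.mk_eq_mk_iff {S T : E →L[R] E} :
    mk R E S = mk R E T ↔ IsCompactOperator ⇑(S - T) :=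
  (RingCon.eq _).trans <|
    ((compactOperatorIdeal R E).rel_iff S T).trans <| TwoSidedIdeal.mem_mk' ..

theorem CalkinAlgebra.mk_eq_zero_iff {T : E →L[R] E} :
    mk R E T = 0 ↔ IsCompactOperator ⇑T := by
  rw [← map_zero (mk R E), mk_eq_mk_iff, sub_zero]

theorem CalkinAlgebra.isUnit_mk_iff {T : E →L[R] E} :
    IsUnit (mk R E T) ↔
      ∃ S : E →L[R] E, IsCompactOperator ⇑(S * T - 1) ∧ IsCompactOperator ⇑(T * S - 1) := by
  simp only [isUnit_iff_exists, ← mk_eq_mk_iff, map_mul, map_one]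
  constructor
  · rintro ⟨s, hTs, hsT⟩
    obtain ⟨S, rfl⟩ := RingCon.mkₐ_surjective (α := R) _ s
    exact ⟨S, hsT, hTs⟩
  · rintro ⟨S, hST, hTS⟩
    exact ⟨mk R E S, hTS, hST⟩

end CalkinAlgebra

theorem essentialSpectrum_eq_spectrum_calkinAlgebra {H : Type*} [NormedAddCommGroup H]
    [InnerProductSpace ℂ H] [CompleteSpace H] (T : H →L[ℂ] H) :
    essentialSpectrum T = spectrum ℂ (CalkinAlgebra.mk ℂ H T) := by
  ext μ
  rw [spectrum.mem_iff, ← IsUnit.neg_iff, neg_sub, ← AlgHom.commutes (CalkinAlgebra.mk ℂ H),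
    ← map_sub, CalkinAlgebra.isUnit_mk_iff, Algebra.algebraMap_eq_smul_one]
  rfl

theorem essentialSpectrum_add_of_products_compact
    {H : Type*} [NormedAddCommGroup H] [InnerProductSpace ℂ H] [CompleteSpace H]
    (S T : H →L[ℂ] H)
    (hST : IsCompactOperator ⇑(S * T)) (hTS : IsCompactOperator ⇑(T * S)) :
    essentialSpectrum (S + T) \ {0}
      = (essentialSpectrum S ∪ essentialSpectrum T) \ {0} := by
  simp only [essentialSpectrum_eq_spectrum_calkinAlgebra, map_add]
  apply spectrum_add_diff_zero_of_mul_eq_zero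
  · rwa [← map_mul, CalkinAlgebra.mk_eq_zero_iff]
  · rwa [← map_mul, CalkinAlgebra.mk_eq_zero_iff]
end

section
/- Let H be a complex Hilbert space and S, T bounded operators on H such that TS and T² are compact. Then σ_e(S + T) \ {0} = σ_e(S) \ {0}. -/
section Aux

variable {H : Type*} [NormedAddCommGroup H] [InnerProductSpace ℂ H] [CompleteSpace H]

omit [CompleteSpace H] in
lemma Cadd {A B : H →L[ℂ] H} (hA : IsCompactOperator ⇑A) (hB : IsCompactOperator ⇑B) :
    IsCompactOperator ⇑(A + B) :=
  hA.add hB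

omit [CompleteSpace H] in
lemma Cneg {A : H →L[ℂ] H} (hA : IsCompactOperator ⇑A) : IsCompactOperator ⇑(-A) :=
  hA.neg

omit [CompleteSpace H] in
lemma Csub {A B : H →L[ℂ] H} (hA : IsCompactOperator ⇑A) (hB : IsCompactOperator ⇑B) :
    IsCompactOperator ⇑(A - B) :=
  hA.sub hB

omit [CompleteSpace H] in
lemma Csmul (c : ℂ) {A : H →L[ℂ] H} (hA : IsCompactOperator ⇑A) :
    IsCompactOperator ⇑(c • A) :=
  hA.smul c

omit [CompleteSpace H] in
lemma Cml (A : H →L[ℂ] H) {B : H →L[ℂ] H} (hB : IsCompactOperator ⇑B) :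
    IsCompactOperator ⇑(A * B) :=
  hB.clm_comp A

omit [CompleteSpace H] in
lemma Cmr {A : H →L[ℂ] H} (B : H →L[ℂ] H) (hA : IsCompactOperator ⇑A) :
    IsCompactOperator ⇑(A * B) :=
  hA.comp_clm B

omit [CompleteSpace H] in
/-- Key algebraic lemma: if `A` has an inverse `R` modulo compacts, `T*A + μ•T` and `T*T`
are compact with `μ ≠ 0`, then `A + T` has an inverse modulo compacts. -/
lemma key {μ : ℂ} (hμ : μ ≠ 0) (T A R : H →L[ℂ] H)
    (hTA : IsCompactOperator ⇑(T * A + μ • T)) (hT2 : IsCompactOperator ⇑(T * T))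
    (h1 : IsCompactOperator ⇑(R * A - 1)) (h2 : IsCompactOperator ⇑(A * R - 1)) :
    ∃ R' : H →L[ℂ] H, IsCompactOperator ⇑(R' * (A + T) - 1) ∧
      IsCompactOperator ⇑((A + T) * R' - 1) := by
  have hTRT : IsCompactOperator ⇑(T * (R * T)) := by
    have e : μ • (T * (R * T)) = (T * A + μ • T) * (R * T) - T * ((A * R - 1) * T) - T * T := by
      simp only [Algebra.smul_def]
      noncomm_ring
    have hc : IsCompactOperator ⇑(μ • (T * (R * T))) := by
      rw [e]
      exact Csub (Csub (Cmr _ hTA) (Cml _ (Cmr _ h2))) hT2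
    rw [← inv_smul_smul₀ hμ (T * (R * T))]
    exact Csmul _ hc
  refine ⟨R - R * T * R, ?_, ?_⟩
  · have e : (R - R * T * R) * (A + T) - 1
        = (R * A - 1) - (R * T) * (R * A - 1) - R * (T * (R * T)) := by noncomm_ring
    rw [e]
    exact Csub (Csub h1 (Cml _ h1)) (Cml _ hTRT)
  · have e : (A + T) * (R - R * T * R) - 1
        = (A * R - 1) - (A * R - 1) * (T * R) - (T * (R * T)) * R := by noncomm_ring
    rw [e]
    exact Csub (Csub h2 (Cmr _ h2)) (Cmr _ hTRT)

end Aux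

theorem essentialSpectrum_add_of_compact_products
    {H : Type*} [NormedAddCommGroup H] [InnerProductSpace ℂ H] [CompleteSpace H]
    (S T : H →L[ℂ] H)
    (hTS : IsCompactOperator ⇑(T * S)) (hT2 : IsCompactOperator ⇑(T * T)) :
    essentialSpectrum (S + T) \ {0} = essentialSpectrum S \ {0} := by
  ext μ
  simp only [Set.mem_diff, Set.mem_singleton_iff, essentialSpectrum, Set.mem_setOf_eq]
  constructor
  · rintro ⟨h, hμ⟩
    refine ⟨fun hex => h ?_, hμ⟩
    obtain ⟨R, h1, h2⟩ := hex
    have hTA : IsCompactOperator ⇑(T * (S - μ • 1) + μ • T) := by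
      have : T * (S - μ • 1) + μ • T = T * S := by
        rw [mul_sub, mul_smul_comm, mul_one]; abel
      rw [this]; exact hTS
    obtain ⟨R', hR1, hR2⟩ := key hμ T (S - μ • 1) R hTA hT2 h1 h2
    have hAT : S - μ • 1 + T = S + T - μ • 1 := by abel
    rw [hAT] at hR1 hR2
    exact ⟨R', hR1, hR2⟩
  · rintro ⟨h, hμ⟩
    refine ⟨fun hex => h ?_, hμ⟩
    obtain ⟨R, h1, h2⟩ := hex
    have hTA : IsCompactOperator ⇑((-T) * (S + T - μ • 1) + μ • (-T)) := by
      have : (-T) * (S + T - μ • 1) + μ • (-T) = -(T * S + T * T) := by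
        rw [neg_mul, mul_sub, mul_add, mul_smul_comm, mul_one, smul_neg]; abel
      rw [this]
      exact Cneg (Cadd hTS hT2)
    have hT2' : IsCompactOperator ⇑((-T) * (-T)) := by
      rw [neg_mul_neg]; exact hT2
    obtain ⟨R', hR1, hR2⟩ := key hμ (-T) (S + T - μ • 1) R hTA hT2' h1 h2
    have hAT : S + T - μ • 1 + -T = S - μ • 1 := by abel
    rw [hAT] at hR1 hR2
    exact ⟨R', hR1, hR2⟩
end

section
/- Let H be a complex Hilbert space and S, T bounded operators on H with S² and T² compact. Then for λ ≠ 0: λ ∈ σ_e(S + T) if and only if λ² ∈ σ_e(ST). -/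
section RingLemmas

variable {Q : Type*} [Ring Q]

private lemma isUnit_of_mul_eq_one_both {u x y : Q} (h1 : x * u = 1) (h2 : u * y = 1) :
    IsUnit u := by
  have hxy : x = y := by
    calc x = x * (u * y) := by rw [h2, mul_one]
    _ = (x * u) * y := by rw [mul_assoc]
    _ = y := by rw [h1, one_mul]
  exact ⟨⟨u, y, h2, by rw [← hxy, h1]⟩, rfl⟩

private lemma core_unit_iff (a b : Q) (ha : a * a = 0) (hb : b * b = 0) :
    IsUnit (a + b - 1) ↔ IsUnit (a * b - 1) := by
  constructor
  · rintro ⟨u, hu⟩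
    set w := ((u⁻¹ : Qˣ) : Q) with hwdef
    have hw1 : w * (a + b - 1) - 1 = 0 := by
      rw [hwdef, ← hu, u.inv_mul, sub_self]
    have hw2 : (a + b - 1) * w - 1 = 0 := by
      rw [hwdef, ← hu, u.mul_inv, sub_self]
    have n1 : w * b * a - (w * a + a) = 0 := by
      have key : w * b * a - (w * a + a) = (w * (a + b - 1) - 1) * a - w * (a * a) := by
        noncomm_ring
      rw [hw1, ha] at key; simpa using key
    have n2 : a * b * w - (a * w + a) = 0 := by
      have key : a * b * w - (a * w + a) = a * ((a + b - 1) * w - 1) - (a * a) * w := by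
        noncomm_ring
      rw [hw2, ha] at key; simpa using key
    have g1 : (a * w - a * w * a - w * a + w * b * a - 1) * (a * b - 1) - 1 =
        w * b * (a * a) * b - a * w * (a * a) * b + a * (w * (a + b - 1) - 1) * b
          - w * (a * a) * b - a * w * (b * b) - (w * b * a - (w * a + a))
          + a * (w * (a + b - 1) - 1) := by
      noncomm_ring
    rw [hw1, ha, hb, n1] at g1
    simp only [mul_zero, zero_mul, sub_zero, zero_sub, add_zero, neg_zero, zero_add] at g1
    have g2 : (a * b - 1) * (a * w - a * w * a - w * a + w * b * a - 1) - 1 =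
        a * b * (w * b * a - (w * a + a)) - a * b * a * (w * (a + b - 1) - 1)
          + a * b * ((a + b - 1) * w - 1) * b - a * (b * b) * w * b
          + (a * b * w - (a * w + a)) * b - (w * b * a - (w * a + a))
          + a * (w * (a + b - 1) - 1) + a * (b * b) := by
      noncomm_ring
    rw [hw1, hw2, hb, n1, n2] at g2
    simp only [mul_zero, zero_mul, sub_zero, zero_sub, add_zero, neg_zero, zero_add] at g2
    exact isUnit_of_mul_eq_one_both (sub_eq_zero.mp g1) (sub_eq_zero.mp g2)
  · rintro ⟨u, hu⟩
    set z := ((u⁻¹ : Qˣ) : Q) with hzdef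
    have hz1 : z * (a * b - 1) - 1 = 0 := by
      rw [hzdef, ← hu, u.inv_mul, sub_self]
    have hz2 : (a * b - 1) * z - 1 = 0 := by
      rw [hzdef, ← hu, u.mul_inv, sub_self]
    have m1 : z * (b * a) + b * a = 0 := by
      have key : z * (b * a) + b * a = -((z * (a * b - 1) - 1) * (b * a)) + z * a * (b * b) * a := by
        noncomm_ring
      rw [hz1, hb] at key; simpa using key
    have m2 : b * a * z + b * a = 0 := by
      have key : b * a * z + b * a = -((b * a) * ((a * b - 1) * z - 1)) + b * (a * a) * (b * z) := by
        noncomm_ring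
      rw [hz2, ha] at key; simpa using key
    have g1 : ((z + b * z * a) * (a + b + 1)) * (a + b - 1) - 1 =
        b * z * (a * a) * a + b * z * (a * a) * b + b * (z * (a * b - 1) - 1) * a
          + b * z * a * (b * b) + z * (a * a) + (z * (a * b - 1) - 1)
          + (z * (b * a) + b * a) + z * (b * b) := by
      noncomm_ring
    rw [hz1, ha, hb, m1] at g1
    simp only [mul_zero, zero_mul, sub_zero, zero_sub, add_zero, neg_zero, zero_add] at g1
    have g2 : (a + b - 1) * ((a + b + 1) * (z + b * z * a)) - 1 =
        (a * a) * b * z * a + a * (b * b) * z * a + b * ((a * b - 1) * z - 1) * a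
          + (b * b) * b * z * a + (a * a) * z + ((a * b - 1) * z - 1)
          + (b * a * z + b * a) + (b * b) * z := by
      noncomm_ring
    rw [hz2, ha, hb, m2] at g2
    simp only [mul_zero, zero_mul, sub_zero, zero_sub, add_zero, neg_zero, zero_add] at g2
    exact isUnit_of_mul_eq_one_both (sub_eq_zero.mp g1) (sub_eq_zero.mp g2)

private lemma isUnit_mul_iff_of_isUnit {u : Q} (hu : IsUnit u) (x : Q) :
    IsUnit (u * x) ↔ IsUnit x := by
  obtain ⟨v, rfl⟩ := hu
  constructor
  · intro h
    have : IsUnit (((v⁻¹ : Qˣ) : Q) * ((v : Q) * x)) := (v⁻¹).isUnit.mul h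
    rwa [← mul_assoc, v.inv_mul, one_mul] at this
  · exact fun h => v.isUnit.mul h

private lemma unit_iff_of_central (a b l l' : Q) (hc : ∀ x : Q, l * x = x * l)
    (hll' : l * l' = 1) (ha : a * a = 0) (hb : b * b = 0) :
    IsUnit (a + b - l) ↔ IsUnit (a * b - l * l) := by
  have hl'l : l' * l = 1 := by rw [← hc l', hll']
  have hc' : ∀ x : Q, l' * x = x * l' := fun x => by
    calc l' * x = l' * x * (l * l') := by rw [hll', mul_one]
    _ = l' * (x * l) * l' := by noncomm_ring
    _ = l' * (l * x) * l' := by rw [hc]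
    _ = x * l' := by rw [← mul_assoc l' l x, hl'l, one_mul]
  have hu : IsUnit l := ⟨⟨l, l', hll', hl'l⟩, rfl⟩
  have ha' : (l' * a) * (l' * a) = 0 := by
    calc (l' * a) * (l' * a) = l' * (a * l') * a := by noncomm_ring
    _ = l' * (l' * a) * a := by rw [← hc' a]
    _ = l' * l' * (a * a) := by noncomm_ring
    _ = 0 := by rw [ha, mul_zero]
  have hb' : (l' * b) * (l' * b) = 0 := by
    calc (l' * b) * (l' * b) = l' * (b * l') * b := by noncomm_ring
    _ = l' * (l' * b) * b := by rw [← hc' b]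
    _ = l' * l' * (b * b) := by noncomm_ring
    _ = 0 := by rw [hb, mul_zero]
  have e1 : a + b - l = l * (l' * a + l' * b - 1) := by
    rw [mul_sub, mul_add, ← mul_assoc, ← mul_assoc, hll', one_mul, one_mul, mul_one]
  have e2 : a * b - l * l = (l * l) * ((l' * a) * (l' * b) - 1) := by
    have h3 : (l' * a) * (l' * b) = l' * (l' * (a * b)) := by
      calc (l' * a) * (l' * b) = l' * (a * l') * b := by noncomm_ring
      _ = l' * (l' * a) * b := by rw [← hc' a]
      _ = l' * (l' * (a * b)) := by noncomm_ring
    have h4 : l * l * (l' * (l' * (a * b))) = a * b := by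
      calc l * l * (l' * (l' * (a * b))) = l * (l * l') * (l' * (a * b)) := by noncomm_ring
      _ = a * b := by rw [hll', mul_one, ← mul_assoc, hll', one_mul]
    rw [h3, mul_sub, mul_one, h4]
  rw [e1, e2, isUnit_mul_iff_of_isUnit hu, isUnit_mul_iff_of_isUnit (hu.mul hu)]
  exact core_unit_iff (l' * a) (l' * b) ha' hb'

end RingLemmas


section Calkin

variable {H : Type*} [NormedAddCommGroup H] [InnerProductSpace ℂ H] [CompleteSpace H]

private def calkinCon (H : Type*) [NormedAddCommGroup H] [InnerProductSpace ℂ H]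
    [CompleteSpace H] : RingCon (H →L[ℂ] H) where
  r f g := IsCompactOperator ⇑(f - g)
  iseqv := by
    constructor
    · intro f
      simpa [sub_self] using (isCompactOperator_zero : IsCompactOperator (0 : H → H))
    · intro f g h
      have : IsCompactOperator (-⇑(f - g)) := h.neg
      have h2 : -⇑(f - g) = ⇑(g - f) := by
        ext x; simp [ContinuousLinearMap.sub_apply]
      rwa [h2] at this
    · intro f g k h1 h2
      have : IsCompactOperator (⇑(f - g) + ⇑(g - k)) := h1.add h2
      have h3 : ⇑(f - g) + ⇑(g - k) = ⇑(f - k) := by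
        ext x; simp [ContinuousLinearMap.sub_apply]
      rwa [h3] at this
  add' := by
    intro w x y z h1 h2
    have : IsCompactOperator (⇑(w - x) + ⇑(y - z)) := h1.add h2
    have h3 : ⇑(w - x) + ⇑(y - z) = ⇑(w + y - (x + z)) := by
      ext v
      simp only [Pi.add_apply, ContinuousLinearMap.sub_apply, ContinuousLinearMap.add_apply]
      abel
    rwa [h3] at this
  mul' := by
    intro w x y z h1 h2
    have hA : IsCompactOperator ⇑(w * (y - z)) := by
      have := h2.clm_comp w
      have h3 : ⇑w ∘ ⇑(y - z) = ⇑(w * (y - z)) := rfl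
      rwa [h3] at this
    have hB : IsCompactOperator ⇑((w - x) * z) := by
      have := h1.comp_clm z
      have h3 : ⇑(w - x) ∘ ⇑z = ⇑((w - x) * z) := rfl
      rwa [h3] at this
    have : IsCompactOperator (⇑(w * (y - z)) + ⇑((w - x) * z)) := hA.add hB
    have h3 : ⇑(w * (y - z)) + ⇑((w - x) * z) = ⇑(w * y - x * z) := by
      have h4 : w * (y - z) + (w - x) * z = w * y - x * z := by noncomm_ring
      rw [← h4]; ext v
      simp [ContinuousLinearMap.add_apply]
    rwa [h3] at this

private lemma not_mem_essentialSpectrum_iff_isUnit (T : H →L[ℂ] H) (μ : ℂ) :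
    μ ∉ essentialSpectrum T ↔ IsUnit ((T - μ • 1 : H →L[ℂ] H) : (calkinCon H).Quotient) := by
  have hmem : μ ∉ essentialSpectrum T ↔ ∃ S : H →L[ℂ] H,
      IsCompactOperator ⇑(S * (T - μ • 1) - 1) ∧
      IsCompactOperator ⇑((T - μ • 1) * S - 1) := by
    simp [essentialSpectrum]
  rw [hmem]
  constructor
  · rintro ⟨S, h1, h2⟩
    have c1 : (calkinCon H) (S * (T - μ • 1)) 1 := h1
    have c2 : (calkinCon H) ((T - μ • 1) * S) 1 := h2
    have e1 : ((S : (calkinCon H).Quotient)) * ((T - μ • 1 : H →L[ℂ] H) : (calkinCon H).Quotient)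
        = 1 := by
      rw [← RingCon.coe_mul, ← RingCon.coe_one]
      exact (RingCon.eq _).mpr c1
    have e2 : ((T - μ • 1 : H →L[ℂ] H) : (calkinCon H).Quotient) * (S : (calkinCon H).Quotient)
        = 1 := by
      rw [← RingCon.coe_mul, ← RingCon.coe_one]
      exact (RingCon.eq _).mpr c2
    exact isUnit_of_mul_eq_one_both e1 e2
  · rintro ⟨v, hv⟩
    obtain ⟨S, hS⟩ := Quotient.mk''_surjective ((v⁻¹ : (calkinCon H).Quotientˣ) :
      (calkinCon H).Quotient)
    have hS' : (S : (calkinCon H).Quotient) = ((v⁻¹ : (calkinCon H).Quotientˣ) :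
      (calkinCon H).Quotient) := hS
    refine ⟨S, ?_, ?_⟩
    · have e1 : ((S * (T - μ • 1) : H →L[ℂ] H) : (calkinCon H).Quotient)
          = ((1 : H →L[ℂ] H) : (calkinCon H).Quotient) := by
        rw [RingCon.coe_mul, RingCon.coe_one, hS', ← hv, Units.inv_mul]
      exact (RingCon.eq _).mp e1
    · have e2 : (((T - μ • 1) * S : H →L[ℂ] H) : (calkinCon H).Quotient)
          = ((1 : H →L[ℂ] H) : (calkinCon H).Quotient) := by
        rw [RingCon.coe_mul, RingCon.coe_one, hS', ← hv, Units.mul_inv]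
      exact (RingCon.eq _).mp e2

end Calkin


theorem mem_essentialSpectrum_add_iff_sq
    {H : Type*} [NormedAddCommGroup H] [InnerProductSpace ℂ H] [CompleteSpace H]
    (S T : H →L[ℂ] H)
    (hS2 : IsCompactOperator ⇑(S * S)) (hT2 : IsCompactOperator ⇑(T * T))
    (μ : ℂ) (hμ : μ ≠ 0) :
    μ ∈ essentialSpectrum (S + T) ↔ μ ^ 2 ∈ essentialSpectrum (S * T) := by
  rw [← not_iff_not, not_mem_essentialSpectrum_iff_isUnit,
    not_mem_essentialSpectrum_iff_isUnit]
  set Q := (calkinCon H).Quotient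
  set a := ((S : H →L[ℂ] H) : Q) with hadef
  set b := ((T : H →L[ℂ] H) : Q) with hbdef
  set l := (((μ • 1 : H →L[ℂ] H)) : Q) with hldef
  set l' := (((μ⁻¹ • 1 : H →L[ℂ] H)) : Q) with hl'def
  have hc : ∀ x : Q, l * x = x * l := by
    intro x
    obtain ⟨f, rfl⟩ := Quotient.mk''_surjective x
    have hf : (Quotient.mk'' f : Q) = ((f : H →L[ℂ] H) : Q) := rfl
    rw [hf, hldef, ← RingCon.coe_mul, ← RingCon.coe_mul]
    congr 1
    rw [smul_mul_assoc, mul_smul_comm, one_mul, mul_one]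
  have hll' : l * l' = 1 := by
    rw [hldef, hl'def, ← RingCon.coe_mul, ← RingCon.coe_one]
    congr 1
    rw [smul_mul_smul_comm, one_mul, mul_inv_cancel₀ hμ, one_smul]
  have ha : a * a = 0 := by
    rw [hadef, ← RingCon.coe_mul, ← RingCon.coe_zero]
    refine (RingCon.eq _).mpr ?_
    show IsCompactOperator ⇑(S * S - 0)
    simpa [sub_zero] using hS2
  have hb : b * b = 0 := by
    rw [hbdef, ← RingCon.coe_mul, ← RingCon.coe_zero]
    refine (RingCon.eq _).mpr ?_
    show IsCompactOperator ⇑(T * T - 0)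
    simpa [sub_zero] using hT2
  have goal1 : ((S + T - μ • 1 : H →L[ℂ] H) : Q) = a + b - l := by
    rw [RingCon.coe_sub, RingCon.coe_add]
  have goal2 : ((S * T - μ ^ 2 • 1 : H →L[ℂ] H) : Q) = a * b - l * l := by
    rw [RingCon.coe_sub, RingCon.coe_mul]
    congr 1
    rw [hldef, ← RingCon.coe_mul]
    congr 1
    rw [smul_mul_smul_comm, one_mul, ← sq]
  rw [goal1, goal2]
  exact unit_iff_of_central a b l l' hc hll' ha hb
end

section
/- Let A be a unital algebra over a field, and a₀, a₁, a₂ ∈ A with aⱼaₖ = 0 for all j, k ∈ {0,1,2} except possibly (j,k) ∈ {(0,1),(1,2),(2,0)}. Then σ(a₀ + a₁ + a₂) \ {0} = {λ : λ³ ∈ σ(a₀a₁a₂)} \ {0}. -/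
theorem spectrum_cyclic_sum_three
    {𝕜 A : Type*} [Field 𝕜] [Ring A] [Algebra 𝕜 A]
    (a₀ a₁ a₂ : A)
    (h00 : a₀ * a₀ = 0) (h02 : a₀ * a₂ = 0)
    (h10 : a₁ * a₀ = 0) (h11 : a₁ * a₁ = 0)
    (h21 : a₂ * a₁ = 0) (h22 : a₂ * a₂ = 0) :
    spectrum 𝕜 (a₀ + a₁ + a₂) \ {0}
      = {μ : 𝕜 | μ ^ 3 ∈ spectrum 𝕜 (a₀ * a₁ * a₂)} \ {0} := by
  have h00' : ∀ x : A, a₀ * (a₀ * x) = 0 := fun x => by rw [← mul_assoc, h00, zero_mul]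
  have h02' : ∀ x : A, a₀ * (a₂ * x) = 0 := fun x => by rw [← mul_assoc, h02, zero_mul]
  have h10' : ∀ x : A, a₁ * (a₀ * x) = 0 := fun x => by rw [← mul_assoc, h10, zero_mul]
  have h11' : ∀ x : A, a₁ * (a₁ * x) = 0 := fun x => by rw [← mul_assoc, h11, zero_mul]
  have h21' : ∀ x : A, a₂ * (a₁ * x) = 0 := fun x => by rw [← mul_assoc, h21, zero_mul]
  have h22' : ∀ x : A, a₂ * (a₂ * x) = 0 := fun x => by rw [← mul_assoc, h22, zero_mul]
  set s : A := a₀ + a₁ + a₂ with hs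
  have hs3 : s * (s * s) = a₀ * (a₁ * a₂) + (a₁ * (a₂ * a₀) + a₂ * (a₀ * a₁)) := by
    rw [hs]
    simp only [mul_add, add_mul, mul_assoc, h00', h02', h10', h11', h21', h22',
      h00, h02, h10, h11, h21, h22, zero_mul, mul_zero, add_zero, zero_add]
    abel
  have key : ∀ μ : 𝕜, μ ≠ 0 →
      (IsUnit (μ • (1:A) - s) ↔ IsUnit (μ ^ 3 • (1:A) - a₀ * a₁ * a₂)) := by
    intro μ hμ
    have hfact : (μ ^ 2 • (1:A) + μ • s + s * s) * (μ • 1 - s)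
        = μ ^ 3 • 1 - s * (s * s) := by
      simp only [mul_sub, sub_mul, add_mul, mul_add, smul_mul_assoc, mul_smul_comm,
        one_mul, mul_one, smul_smul, smul_sub, smul_add, mul_assoc]
      module
    have hfact' : (μ • (1:A) - s) * (μ ^ 2 • (1:A) + μ • s + s * s)
        = μ ^ 3 • 1 - s * (s * s) := by
      simp only [mul_sub, sub_mul, add_mul, mul_add, smul_mul_assoc, mul_smul_comm,
        one_mul, mul_one, smul_smul, smul_sub, smul_add, mul_assoc]
      module
    constructor
    · rintro ⟨U, hU⟩
      have hu1 : (μ • (1:A) - s) * ↑U⁻¹ = 1 := by rw [← hU]; exact U.mul_inv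
      have hu2 : (↑U⁻¹ : A) * (μ • (1:A) - s) = 1 := by rw [← hU]; exact U.inv_mul
      set u : A := ↑U⁻¹ with hu
      -- u commutes with s
      have hus : Commute u s := by
        have h' : (μ • (1:A) - s) * u = u * (μ • (1:A) - s) := hu1.trans hu2.symm
        have h'' : μ • u - s * u = μ • u - u * s := by
          simpa only [sub_mul, mul_sub, smul_mul_assoc, mul_smul_comm, one_mul, mul_one]
            using h'
        exact (sub_right_injective h'').symm
      have hut3 : Commute u (s * (s * s)) := hus.mul_right (hus.mul_right hus)
      -- (μ³•1 - s³) * u = μ²•1 + μ•s + s²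
      have hkey0 : (μ ^ 3 • (1:A) - s * (s * s)) * u = μ ^ 2 • (1:A) + μ • s + s * s := by
        calc (μ ^ 3 • (1:A) - s * (s * s)) * u
            = ((μ ^ 2 • (1:A) + μ • s + s * s) * (μ • 1 - s)) * u := by rw [hfact]
          _ = (μ ^ 2 • (1:A) + μ • s + s * s) * ((μ • 1 - s) * u) := mul_assoc _ _ _
          _ = μ ^ 2 • (1:A) + μ • s + s * s := by rw [hu1, mul_one]
      have hba : (a₀ * a₁ * a₂) * a₀ = a₀ * (s * (s * s)) := by
        rw [hs3]
        simp only [mul_add, add_mul, mul_assoc, h00', h02', h10', h11', h21', h22',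
          zero_mul, mul_zero, add_zero, zero_add]
      have hyb : (a₁ * a₂) * (a₀ * a₁ * a₂) = (s * (s * s)) * (a₁ * a₂) := by
        rw [hs3]
        simp only [mul_add, add_mul, mul_assoc, h00', h02', h10', h11', h21', h22',
          h21, h11, zero_mul, mul_zero, add_zero, zero_add]
      -- core identity
      have core : a₀ * (((μ ^ 3 • (1:A) - s * (s * s)) * u) * (a₁ * a₂))
          = μ ^ 2 • (a₀ * a₁ * a₂) := by
        rw [hkey0]
        simp only [mul_add, add_mul, smul_mul_assoc, mul_smul_comm, one_mul, mul_one,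
          mul_assoc, hs, h00', h02', h10', h11', h21', h22', zero_mul, mul_zero,
          add_zero, zero_add, smul_zero]
      have keyE : μ ^ 3 • (a₀ * (u * (a₁ * a₂))) - (a₀ * a₁ * a₂) * (a₀ * (u * (a₁ * a₂)))
          = μ ^ 2 • (a₀ * a₁ * a₂) := by
        have e1 : (a₀ * a₁ * a₂) * (a₀ * (u * (a₁ * a₂)))
            = a₀ * (((s * (s * s)) * u) * (a₁ * a₂)) := by
          rw [← mul_assoc, hba, mul_assoc, ← mul_assoc (s * (s*s)) u]
        rw [e1, ← core]
        simp only [sub_mul, smul_mul_assoc, mul_sub, mul_smul_comm, one_mul, mul_one]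
      have keyE2 : μ ^ 3 • (a₀ * (u * (a₁ * a₂))) - (a₀ * (u * (a₁ * a₂))) * (a₀ * a₁ * a₂)
          = μ ^ 2 • (a₀ * a₁ * a₂) := by
        have e1 : (a₀ * (u * (a₁ * a₂))) * (a₀ * a₁ * a₂)
            = a₀ * (((s * (s * s)) * u) * (a₁ * a₂)) := by
          calc (a₀ * (u * (a₁ * a₂))) * (a₀ * a₁ * a₂)
              = a₀ * (u * ((a₁ * a₂) * (a₀ * a₁ * a₂))) := by simp only [mul_assoc]
            _ = a₀ * (u * ((s * (s * s)) * (a₁ * a₂))) := by rw [hyb]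
            _ = a₀ * ((u * (s * (s * s))) * (a₁ * a₂)) := by rw [← mul_assoc u]
            _ = a₀ * (((s * (s * s)) * u) * (a₁ * a₂)) := by rw [hut3.eq]
        rw [e1, ← core]
        simp only [sub_mul, smul_mul_assoc, mul_sub, mul_smul_comm, one_mul, mul_one]
      -- build the two-sided inverse
      have main1 : (μ ^ 3 • (1:A) - a₀ * a₁ * a₂) * (μ ^ 2 • (1:A) + a₀ * (u * (a₁ * a₂)))
          = μ ^ 5 • 1 := by
        have exp1 : (μ ^ 3 • (1:A) - a₀ * a₁ * a₂) * (μ ^ 2 • (1:A) + a₀ * (u * (a₁ * a₂)))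
            = μ ^ 5 • (1:A) - μ ^ 2 • (a₀ * a₁ * a₂)
              + (μ ^ 3 • (a₀ * (u * (a₁ * a₂))) - (a₀ * a₁ * a₂) * (a₀ * (u * (a₁ * a₂)))) := by
          simp only [sub_mul, mul_add, add_mul, smul_mul_assoc, mul_smul_comm, one_mul,
            mul_one, smul_smul]
          module
        rw [exp1, keyE]
        module
      have main2 : (μ ^ 2 • (1:A) + a₀ * (u * (a₁ * a₂))) * (μ ^ 3 • (1:A) - a₀ * a₁ * a₂)
          = μ ^ 5 • 1 := by
        have exp2 : (μ ^ 2 • (1:A) + a₀ * (u * (a₁ * a₂))) * (μ ^ 3 • (1:A) - a₀ * a₁ * a₂)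
            = μ ^ 5 • (1:A) - μ ^ 2 • (a₀ * a₁ * a₂)
              + (μ ^ 3 • (a₀ * (u * (a₁ * a₂))) - (a₀ * (u * (a₁ * a₂))) * (a₀ * a₁ * a₂)) := by
          simp only [sub_mul, mul_add, add_mul, mul_sub, smul_mul_assoc, mul_smul_comm,
            one_mul, mul_one, smul_smul]
          module
        rw [exp2, keyE2]
        module
      have hμ5 : (μ ^ 5 : 𝕜) ≠ 0 := pow_ne_zero _ hμ
      refine ⟨⟨μ ^ 3 • (1:A) - a₀ * a₁ * a₂,
        (μ ^ 5)⁻¹ • (μ ^ 2 • (1:A) + a₀ * (u * (a₁ * a₂))), ?_, ?_⟩, rfl⟩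
      · rw [mul_smul_comm, main1, smul_smul, inv_mul_cancel₀ hμ5, one_smul]
      · rw [smul_mul_assoc, main2, smul_smul, inv_mul_cancel₀ hμ5, one_smul]
    · rintro ⟨V, hV⟩
      have hv1 : (μ ^ 3 • (1:A) - a₀ * a₁ * a₂) * ↑V⁻¹ = 1 := by rw [← hV]; exact V.mul_inv
      have hv2 : (↑V⁻¹ : A) * (μ ^ 3 • (1:A) - a₀ * a₁ * a₂) = 1 := by rw [← hV]; exact V.inv_mul
      set v : A := ↑V⁻¹ with hv
      have hμ3 : (μ ^ 3 : 𝕜) ≠ 0 := pow_ne_zero _ hμ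
      -- c := a₁ * (a₂ * a₀), d := a₂ * (a₀ * a₁)
      have mc1 : (μ ^ 3 • (1:A) - a₁ * (a₂ * a₀)) * (1 + (a₁ * a₂) * (v * a₀))
          = μ ^ 3 • 1 := by
        have expand : (a₁ * (a₂ * a₀)) * ((a₁ * a₂) * (v * a₀))
            = (a₁ * a₂) * (((a₀ * a₁ * a₂) * v) * a₀) := by
          simp only [mul_assoc]
        have hv1' : ((a₀ * a₁ * a₂) * v) = μ ^ 3 • v - 1 := by
          have := hv1
          rw [sub_mul, smul_mul_assoc, one_mul, sub_eq_iff_eq_add] at this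
          rw [this]; abel
        simp only [mul_add, sub_mul, add_mul, mul_one, one_mul, smul_mul_assoc,
          mul_smul_comm, expand, hv1', mul_sub, sub_mul, smul_sub]
        (try simp only [mul_assoc, smul_sub, mul_one, mul_sub, sub_mul, smul_mul_assoc, mul_smul_comm])
        module
      have mc2 : (1 + (a₁ * a₂) * (v * a₀)) * (μ ^ 3 • (1:A) - a₁ * (a₂ * a₀))
          = μ ^ 3 • 1 := by
        have expand : ((a₁ * a₂) * (v * a₀)) * (a₁ * (a₂ * a₀))
            = (a₁ * a₂) * ((v * (a₀ * a₁ * a₂)) * a₀) := by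
          simp only [mul_assoc]
        have hv2' : (v * (a₀ * a₁ * a₂)) = μ ^ 3 • v - 1 := by
          have := hv2
          rw [mul_sub, mul_smul_comm, mul_one, sub_eq_iff_eq_add] at this
          rw [this]; abel
        simp only [mul_add, sub_mul, add_mul, mul_sub, mul_one, one_mul, smul_mul_assoc,
          mul_smul_comm, expand, hv2', sub_mul, smul_sub]
        (try simp only [mul_assoc, smul_sub, mul_one, mul_sub, sub_mul, smul_mul_assoc, mul_smul_comm])
        module
      have md1 : (μ ^ 3 • (1:A) - a₂ * (a₀ * a₁)) * (1 + a₂ * (v * (a₀ * a₁)))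
          = μ ^ 3 • 1 := by
        have expand : (a₂ * (a₀ * a₁)) * (a₂ * (v * (a₀ * a₁)))
            = a₂ * (((a₀ * a₁ * a₂) * v) * (a₀ * a₁)) := by
          simp only [mul_assoc]
        have hv1' : ((a₀ * a₁ * a₂) * v) = μ ^ 3 • v - 1 := by
          have := hv1
          rw [sub_mul, smul_mul_assoc, one_mul, sub_eq_iff_eq_add] at this
          rw [this]; abel
        simp only [mul_add, sub_mul, add_mul, mul_one, one_mul, smul_mul_assoc,
          mul_smul_comm, expand, hv1', mul_sub, sub_mul, smul_sub]
        (try simp only [mul_assoc, smul_sub, mul_one, mul_sub, sub_mul, smul_mul_assoc, mul_smul_comm])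
        module
      have md2 : (1 + a₂ * (v * (a₀ * a₁))) * (μ ^ 3 • (1:A) - a₂ * (a₀ * a₁))
          = μ ^ 3 • 1 := by
        have expand : (a₂ * (v * (a₀ * a₁))) * (a₂ * (a₀ * a₁))
            = a₂ * ((v * (a₀ * a₁ * a₂)) * (a₀ * a₁)) := by
          simp only [mul_assoc]
        have hv2' : (v * (a₀ * a₁ * a₂)) = μ ^ 3 • v - 1 := by
          have := hv2
          rw [mul_sub, mul_smul_comm, mul_one, sub_eq_iff_eq_add] at this
          rw [this]; abel
        simp only [mul_add, sub_mul, add_mul, mul_sub, mul_one, one_mul, smul_mul_assoc,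
          mul_smul_comm, expand, hv2', sub_mul, smul_sub]
        (try simp only [mul_assoc, smul_sub, mul_one, mul_sub, sub_mul, smul_mul_assoc, mul_smul_comm])
        module
      have unit_c : IsUnit (μ ^ 3 • (1:A) - a₁ * (a₂ * a₀)) := by
        refine ⟨⟨_, (μ ^ 3)⁻¹ • (1 + (a₁ * a₂) * (v * a₀)), ?_, ?_⟩, rfl⟩
        · rw [mul_smul_comm, mc1, smul_smul, inv_mul_cancel₀ hμ3, one_smul]
        · rw [smul_mul_assoc, mc2, smul_smul, inv_mul_cancel₀ hμ3, one_smul]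
      have unit_d : IsUnit (μ ^ 3 • (1:A) - a₂ * (a₀ * a₁)) := by
        refine ⟨⟨_, (μ ^ 3)⁻¹ • (1 + a₂ * (v * (a₀ * a₁))), ?_, ?_⟩, rfl⟩
        · rw [mul_smul_comm, md1, smul_smul, inv_mul_cancel₀ hμ3, one_smul]
        · rw [smul_mul_assoc, md2, smul_smul, inv_mul_cancel₀ hμ3, one_smul]
      have unit_b : IsUnit (μ ^ 3 • (1:A) - a₀ * a₁ * a₂) := ⟨V, hV⟩
      have hprod : (μ ^ 3 • (1:A) - a₀ * a₁ * a₂) *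
          ((μ ^ 3 • (1:A) - a₁ * (a₂ * a₀)) * (μ ^ 3 • (1:A) - a₂ * (a₀ * a₁)))
          = μ ^ 6 • (μ ^ 3 • (1:A) - s * (s * s)) := by
        rw [hs3]
        simp only [mul_sub, sub_mul, mul_add, add_mul, smul_mul_assoc, mul_smul_comm,
          one_mul, mul_one, smul_smul, smul_sub, smul_add, mul_assoc,
          h00', h02', h10', h11', h21', h22', h00, h02, h10, h11, h21, h22,
          zero_mul, mul_zero, add_zero, zero_add, smul_zero, sub_zero]
        module
      have unit_t3 : IsUnit (μ ^ 3 • (1:A) - s * (s * s)) := by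
        have hμ6 : (μ ^ 6 : 𝕜) ≠ 0 := pow_ne_zero _ hμ
        have hunit : IsUnit (μ ^ 6 • (μ ^ 3 • (1:A) - s * (s * s))) := by
          rw [← hprod]; exact unit_b.mul (unit_c.mul unit_d)
        have hscal : IsUnit ((μ ^ 6)⁻¹ • (1:A)) := by
          refine ⟨⟨(μ ^ 6)⁻¹ • (1:A), μ ^ 6 • (1:A), ?_, ?_⟩, rfl⟩
          · rw [smul_mul_assoc, mul_smul_comm, smul_smul, one_mul, inv_mul_cancel₀ hμ6, one_smul]
          · rw [smul_mul_assoc, mul_smul_comm, smul_smul, one_mul, mul_inv_cancel₀ hμ6, one_smul]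
        have hrw : μ ^ 3 • (1:A) - s * (s * s)
            = ((μ ^ 6)⁻¹ • (1:A)) * (μ ^ 6 • (μ ^ 3 • (1:A) - s * (s * s))) := by
          rw [smul_mul_assoc, one_mul, smul_smul, inv_mul_cancel₀ hμ6, one_smul]
        rw [hrw]
        exact hscal.mul hunit
      obtain ⟨E, hE⟩ := unit_t3
      have he1 : (μ ^ 3 • (1:A) - s * (s * s)) * ↑E⁻¹ = 1 := by rw [← hE]; exact E.mul_inv
      have he2 : (↑E⁻¹ : A) * (μ ^ 3 • (1:A) - s * (s * s)) = 1 := by rw [← hE]; exact E.inv_mul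
      set e' : A := ↑E⁻¹ with he'
      have h1 : (μ • (1:A) - s) * ((μ ^ 2 • (1:A) + μ • s + s * s) * e') = 1 := by
        rw [← mul_assoc, hfact', he1]
      have h2 : (e' * (μ ^ 2 • (1:A) + μ • s + s * s)) * (μ • (1:A) - s) = 1 := by
        rw [mul_assoc, hfact, he2]
      have hyz : e' * (μ ^ 2 • (1:A) + μ • s + s * s)
          = (μ ^ 2 • (1:A) + μ • s + s * s) * e' := by
        calc e' * (μ ^ 2 • (1:A) + μ • s + s * s)
            = (e' * (μ ^ 2 • (1:A) + μ • s + s * s)) *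
              ((μ • (1:A) - s) * ((μ ^ 2 • (1:A) + μ • s + s * s) * e')) := by rw [h1, mul_one]
          _ = ((e' * (μ ^ 2 • (1:A) + μ • s + s * s)) * (μ • (1:A) - s)) *
              ((μ ^ 2 • (1:A) + μ • s + s * s) * e') := by rw [← mul_assoc]
          _ = (μ ^ 2 • (1:A) + μ • s + s * s) * e' := by rw [h2, one_mul]
      exact ⟨⟨μ • (1:A) - s, (μ ^ 2 • (1:A) + μ • s + s * s) * e', h1, by rw [← hyz]; exact h2⟩, rfl⟩
  ext μ
  rcases eq_or_ne μ 0 with rfl | hμ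
  · simp
  · simp only [Set.mem_diff, Set.mem_singleton_iff, Set.mem_setOf_eq, hμ, not_false_iff,
      and_true, spectrum.mem_iff, Algebra.algebraMap_eq_smul_one]
    exact not_congr (key μ hμ)
end
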